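/- arXiv:2408.07252 — 2 statements merged into one kernel-verified Lean document; each statement's English description precedes it below -/
import Mathlib

section
/- Let A and M be real m×m matrices. Suppose the matrix-valued function t ↦ e^{tA}·M·e^{tAᵀ} is integrable on [0,∞) and tends to the zero matrix as t → ∞. Then the matrix W = ∫₀^∞ e^{tA}·M·e^{tAᵀ} dt satisfies the Lyapunov equation A·W + W·Aᵀ + M = 0. -/
/-!
`F t = e^{tA} M e^{tAᵀ}` solves `F' = A F + F Aᵀ` with `F 0 = M`. Integrating over `[0, ∞)`
entry by entry and using `F t → 0` gives `A W + W Aᵀ = -M`.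
-/

open Matrix MeasureTheory Filter

open NormedSpace

theorem hasDerivAt_exp_smul_mul_mul_exp_smul {𝔸 : Type*} [NormedRing 𝔸] [NormedAlgebra ℝ 𝔸]
    [CompleteSpace 𝔸] (A M B : 𝔸) (t : ℝ) :
    HasDerivAt (fun u : ℝ => exp (u • A) * M * exp (u • B))
      (A * (exp (t • A) * M * exp (t • B)) + exp (t • A) * M * exp (t • B) * B) t := by
  refine (((hasDerivAt_exp_smul_const' A t).mul_const M).mul
    (hasDerivAt_exp_smul_const B t)).congr_deriv ?_
  simp only [mul_assoc]

namespace Matrix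

variable {l n p : Type*} [Fintype n] {𝕜 : Type*} [RCLike 𝕜]

theorem hasDerivAt_exp_smul_mul_mul_exp_smul_apply [DecidableEq n] (A M B : Matrix n n 𝕜)
    (t : ℝ) (i j : n) :
    HasDerivAt (fun u : ℝ => (exp (u • A) * M * exp (u • B)) i j)
      ((A * (exp (t • A) * M * exp (t • B)) + exp (t • A) * M * exp (t • B) * B) i j) t := by
  -- Any normed-algebra structure will do: the derivative of an entry does not depend on it.
  let _ : NormedRing (Matrix n n 𝕜) := Matrix.linftyOpNormedRing
  let _ : NormedAlgebra ℝ (Matrix n n 𝕜) := Matrix.linftyOpNormedAlgebra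
  exact (entryLinearMap ℝ 𝕜 i j).toContinuousLinearMap.hasFDerivAt.comp_hasDerivAt t
    (hasDerivAt_exp_smul_mul_mul_exp_smul A M B t)

variable {α : Type*} [MeasurableSpace α] {μ : Measure α}

theorem integrable_mul_apply (A : Matrix l n 𝕜) {F : α → Matrix n p 𝕜}
    (hF : ∀ j k, Integrable (fun x => F x j k) μ) (i : l) (k : p) :
    Integrable (fun x => (A * F x) i k) μ := by
  simp only [mul_apply]
  exact integrable_finsetSum _ fun j _ => (hF j k).const_mul _

theorem integrable_apply_mul {F : α → Matrix l n 𝕜} (B : Matrix n p 𝕜)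
    (hF : ∀ i j, Integrable (fun x => F x i j) μ) (i : l) (k : p) :
    Integrable (fun x => (F x * B) i k) μ := by
  simp only [mul_apply]
  exact integrable_finsetSum _ fun j _ => (hF i j).mul_const _

theorem mul_of_integral (A : Matrix l n 𝕜) {F : α → Matrix n p 𝕜}
    (hF : ∀ j k, Integrable (fun x => F x j k) μ) :
    A * of (fun j k => ∫ x, F x j k ∂μ) = of fun i k => ∫ x, (A * F x) i k ∂μ := by
  ext i k
  simp only [mul_apply, of_apply]
  rw [integral_finsetSum _ fun j _ => (hF j k).const_mul _]
  simp only [integral_const_mul]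

theorem of_integral_mul {F : α → Matrix l n 𝕜} (B : Matrix n p 𝕜)
    (hF : ∀ i j, Integrable (fun x => F x i j) μ) :
    of (fun i j => ∫ x, F x i j ∂μ) * B = of fun i k => ∫ x, (F x * B) i k ∂μ := by
  ext i k
  simp only [mul_apply, of_apply]
  rw [integral_finsetSum _ fun j _ => (hF i j).mul_const _]
  simp only [integral_mul_const]

end Matrix

/-- If `t ↦ e^{tA}·M·e^{tAᵀ}` is integrable on `[0,∞)` and tends to the zero
matrix as `t → ∞`, then `W = ∫₀^∞ e^{tA}·M·e^{tAᵀ} dt` satisfies `A·W + W·Aᵀ + M = 0`. -/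
theorem gramian_satisfies_lyapunov
    {m : ℕ} (A M : Matrix (Fin m) (Fin m) ℝ)
    (hint : ∀ i j : Fin m,
      IntegrableOn
        (fun t : ℝ =>
          (NormedSpace.exp (t • A) * M * NormedSpace.exp (t • Aᵀ)) i j)
        (Set.Ici 0))
    (hlim : Tendsto
      (fun t : ℝ => NormedSpace.exp (t • A) * M * NormedSpace.exp (t • Aᵀ))
      atTop (nhds (0 : Matrix (Fin m) (Fin m) ℝ))) :
    A * Matrix.of (fun i j =>
        ∫ t in Set.Ici (0 : ℝ),
          (NormedSpace.exp (t • A) * M * NormedSpace.exp (t • Aᵀ)) i j) +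
      Matrix.of (fun i j =>
        ∫ t in Set.Ici (0 : ℝ),
          (NormedSpace.exp (t • A) * M * NormedSpace.exp (t • Aᵀ)) i j) * Aᵀ +
      M = 0 := by
  have hint_Ioi : ∀ i j,
      IntegrableOn (fun t : ℝ => (exp (t • A) * M * exp (t • Aᵀ)) i j) (Set.Ioi 0) :=
    fun i j => (hint i j).mono_set Set.Ioi_subset_Ici_self
  have hftc : ∀ i j, ∫ t in Set.Ioi (0 : ℝ),
      (A * (exp (t • A) * M * exp (t • Aᵀ)) + exp (t • A) * M * exp (t • Aᵀ) * Aᵀ) i j =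
        -M i j := fun i j => by
    rw [integral_Ioi_of_hasDerivAt_of_tendsto'
      (fun t _ => hasDerivAt_exp_smul_mul_mul_exp_smul_apply A M Aᵀ t i j)
      ((integrable_mul_apply A hint_Ioi i j).add (integrable_apply_mul Aᵀ hint_Ioi i j))
      ((hlim.apply_nhds i).apply_nhds j)]
    simp
  simp only [integral_Ici_eq_integral_Ioi]
  rw [mul_of_integral A hint_Ioi, of_integral_mul Aᵀ hint_Ioi]
  ext i j
  rw [Matrix.add_apply, Matrix.add_apply, of_apply, of_apply,
    ← integral_add (integrable_mul_apply A hint_Ioi i j) (integrable_apply_mul Aᵀ hint_Ioi i j)]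
  simpa [eq_neg_iff_add_eq_zero] using hftc i j
end

section
/- Suppose all the following data are real: Λ ∈ ℝ^{l×l} with Λᵀ = Λ; B̂ ∈ ℝ^{l×q}; R̂ ∈ ℝ^{q×q} symmetric positive definite; Q₂ ∈ ℝ^{l×l} symmetric positive semidefinite; M₂ ∈ ℝ^{l×l} symmetric positive semidefinite; b_M ∈ ℝ^l; continuous b, b_Q : [t₀,t₁] → ℝ^l; and q₀ ∈ ℝ^l. Suppose P : [t₀,t₁] → ℝ^{l×l} is continuously differentiable with P(t)ᵀ = P(t) for all t, solving the Riccati equation P' = −PΛ − ΛP − Q₂ + PB̂R̂⁻¹B̂ᵀP with terminal condition P(t₁) = M₂, and s : [t₀,t₁] → ℝ^l is continuously differentiable solving s' = (PB̂R̂⁻¹B̂ᵀ − Λ)s + b_Q + 2Pb with s(t₁) = −b_M. For a continuous control u : [t₀,t₁] → ℝ^q, let q_u denote the solution of q' = Λq + B̂u + b with q(t₀) = q₀, and define the cost J̃(u) = ∫_{t₀}^{t₁} (b_Q(t)·q_u(t) + q_u(t)ᵀQ₂q_u(t) + u(t)ᵀR̂u(t)) dt + b_M·q_u(t₁) + q_u(t₁)ᵀM₂q_u(t₁).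 Let q* be the solution of the closed-loop equation q' = (Λ − B̂R̂⁻¹B̂ᵀP)q + (1/2)B̂R̂⁻¹B̂ᵀs + b with q(t₀) = q₀, and let u*(t) = −R̂⁻¹B̂ᵀP(t)q*(t) + (1/2)R̂⁻¹B̂ᵀs(t). Then for every continuous control u, J̃(u) ≥ J̃(u*). -/
/-! The quadratic-affine function `V(t, x) = xᵀP(t)x − s(t)·x` turns the cost into a square.
Along any admissible pair `(u, q)` the Riccati and compensation equations give
`d/dt V(t, q t) = (u − ū)ᵀR̂(u − ū) + g(t) − (running cost)`, where `ū` is the feedback law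
evaluated at `q t` and `g` involves only `s` and `b`. Integrating, and using that `V(t₁, ·)` is the
terminal cost, `J̃(u) = ∫ (u − ū)ᵀR̂(u − ū) + ∫ g + V(t₀, q₀)`. The integral is nonnegative
because `R̂` is positive definite, and it vanishes on the closed loop `(u*, q*)`. -/

open Matrix MeasureTheory

attribute [local instance] Matrix.normedAddCommGroup Matrix.normedSpace

section Calculus

variable {𝕜 : Type*} [NontriviallyNormedField 𝕜] {m n : Type*} [Fintype n] {S : Set 𝕜} {t : 𝕜}

theorem HasDerivWithinAt.dotProduct {f g : 𝕜 → n → 𝕜} {f' g' : n → 𝕜}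
    (hf : HasDerivWithinAt f f' S t) (hg : HasDerivWithinAt g g' S t) :
    HasDerivWithinAt (fun τ => f τ ⬝ᵥ g τ) (f' ⬝ᵥ g t + f t ⬝ᵥ g') S t := by
  have h := HasDerivWithinAt.fun_sum (u := Finset.univ) fun i _ =>
    (hasDerivWithinAt_pi.1 hf i).fun_mul (hasDerivWithinAt_pi.1 hg i)
  rw [Finset.sum_add_distrib] at h
  exact h

theorem HasDerivWithinAt.matrix_mulVec {A : 𝕜 → Matrix m n 𝕜} {A' : Matrix m n 𝕜}
    {x : 𝕜 → n → 𝕜} {x' : n → 𝕜}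
    (hA : HasDerivWithinAt A A' S t) (hx : HasDerivWithinAt x x' S t) :
    HasDerivWithinAt (fun τ => A τ *ᵥ x τ) (A' *ᵥ x t + A t *ᵥ x') S t :=
  hasDerivWithinAt_pi.2 fun i => (hasDerivWithinAt_pi.1 hA i).dotProduct hx

end Calculus

section Continuity

variable {X R l m n : Type*} [TopologicalSpace X] [TopologicalSpace R] [Fintype m] {S : Set X}

theorem ContinuousOn.dotProduct [Mul R] [AddCommMonoid R] [ContinuousAdd R] [ContinuousMul R]
    {f g : X → m → R} (hf : ContinuousOn f S) (hg : ContinuousOn g S) :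
    ContinuousOn (fun x => f x ⬝ᵥ g x) S :=
  (continuous_fst.dotProduct continuous_snd).comp_continuousOn (hf.prodMk hg)

theorem ContinuousOn.matrix_mulVec [NonUnitalNonAssocSemiring R] [ContinuousAdd R]
    [ContinuousMul R] {A : X → Matrix n m R} {x : X → m → R} (hA : ContinuousOn A S)
    (hx : ContinuousOn x S) : ContinuousOn (fun t => A t *ᵥ x t) S :=
  (continuous_fst.matrix_mulVec continuous_snd).comp_continuousOn (hA.prodMk hx)

theorem ContinuousOn.matrix_mul [Mul R] [AddCommMonoid R] [ContinuousAdd R] [ContinuousMul R]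
    {A : X → Matrix l m R} {B : X → Matrix m n R} (hA : ContinuousOn A S)
    (hB : ContinuousOn B S) : ContinuousOn (fun t => A t * B t) S :=
  (continuous_fst.matrix_mul continuous_snd).comp_continuousOn (hA.prodMk hB)

end Continuity

theorem intervalIntegral.integral_eq_sub_of_hasDerivWithinAt_Icc {E : Type*}
    [NormedAddCommGroup E] [NormedSpace ℝ E] [CompleteSpace E] {f f' : ℝ → E} {a b : ℝ}
    (hab : a ≤ b) (hf : ∀ t ∈ Set.Icc a b, HasDerivWithinAt f (f' t) (Set.Icc a b) t)
    (hf' : ContinuousOn f' (Set.Icc a b)) : ∫ t in a..b, f' t = f b - f a :=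
  integral_eq_sub_of_hasDeriv_right_of_le hab (fun t ht => (hf t ht).continuousWithinAt)
    (fun t ht => (hf t (Set.Ioo_subset_Icc_self ht)).mono_of_mem_nhdsWithin
      (Icc_mem_nhdsGT_of_mem ⟨ht.1.le, ht.2⟩))
    (hf'.intervalIntegrable_of_Icc hab)

theorem Matrix.mulVec_dotProduct {R m n : Type*} [CommSemiring R] [Fintype m] [Fintype n]
    (A : Matrix m n R) (x : n → R) (y : m → R) : A *ᵥ x ⬝ᵥ y = x ⬝ᵥ Aᵀ *ᵥ y := by
  rw [dotProduct_comm, dotProduct_transpose_mulVec]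

namespace ExtendedLQR

variable {n k : Type*} [Fintype n] [Fintype k] [DecidableEq k]

/-- The paper's `u* = −R̂⁻¹B̂ᵀPq + (1/2)R̂⁻¹B̂ᵀs`, evaluated at the state `x`. -/
noncomputable def feedback (R : Matrix k k ℝ) (B : Matrix n k ℝ) (P : Matrix n n ℝ)
    (s x : n → ℝ) : k → ℝ :=
  -(R⁻¹ * Bᵀ * P).mulVec x + (1 / 2 : ℝ) • (R⁻¹ * Bᵀ).mulVec s

/-- The paper's `J̃`, for a control `u` and its state trajectory `q`. -/
noncomputable def cost (t₀ t₁ : ℝ) (bQ : ℝ → n → ℝ) (Q : Matrix n n ℝ) (R : Matrix k k ℝ)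
    (bM : n → ℝ) (M : Matrix n n ℝ) (u : ℝ → k → ℝ) (q : ℝ → n → ℝ) : ℝ :=
  (∫ t in t₀..t₁, (bQ t ⬝ᵥ q t + q t ⬝ᵥ Q.mulVec (q t) + u t ⬝ᵥ R.mulVec (u t))) +
    bM ⬝ᵥ q t₁ + q t₁ ⬝ᵥ M.mulVec (q t₁)

theorem mulVec_feedback (R : Matrix k k ℝ) (B : Matrix n k ℝ) (P : Matrix n n ℝ) (s x : n → ℝ) :
    B *ᵥ feedback R B P s x = -(B * R⁻¹ * Bᵀ * P) *ᵥ x + (1 / 2 : ℝ) • (B * R⁻¹ * Bᵀ) *ᵥ s := by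
  simp only [feedback, mulVec_add, mulVec_neg, mulVec_smul, mulVec_mulVec, neg_mulVec,
    Matrix.mul_assoc]

theorem continuousOn_feedback {X : Type*} [TopologicalSpace X] {S : Set X} (R : Matrix k k ℝ)
    (B : Matrix n k ℝ) {P : X → Matrix n n ℝ} {s x : X → n → ℝ} (hP : ContinuousOn P S)
    (hs : ContinuousOn s S) (hx : ContinuousOn x S) :
    ContinuousOn (fun t => feedback R B (P t) (s t) (x t)) S :=
  ((continuousOn_const.matrix_mul hP).matrix_mulVec hx).neg.add
    ((continuousOn_const.matrix_mulVec hs).fun_const_smul _)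

/-- The left-hand side is `d/dt (xᵀPx − s·x)` along `x' = Λx + Bv + b`, with `P'` and `s'` given
by the Riccati and compensation equations. -/
theorem riccati_completion_of_squares {Λ Q P : Matrix n n ℝ} {B : Matrix n k ℝ}
    {R : Matrix k k ℝ} (hΛ : Λᵀ = Λ) (hR : Rᵀ = R) (hRdet : IsUnit R.det) (hP : Pᵀ = P)
    (x s b bQ : n → ℝ) (v : k → ℝ) :
    ((Λ *ᵥ x + B *ᵥ v + b) ⬝ᵥ P *ᵥ x
      + x ⬝ᵥ ((-(P * Λ) - Λ * P - Q + P * B * R⁻¹ * Bᵀ * P) *ᵥ x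
          + P *ᵥ (Λ *ᵥ x + B *ᵥ v + b)))
    - (((P * B * R⁻¹ * Bᵀ - Λ) *ᵥ s + bQ + (2 : ℝ) • P *ᵥ b) ⬝ᵥ x
        + s ⬝ᵥ (Λ *ᵥ x + B *ᵥ v + b))
    = (v - feedback R B P s x) ⬝ᵥ R *ᵥ (v - feedback R B P s x)
      + (-(1 / 4 : ℝ) * (s ⬝ᵥ (B * R⁻¹ * Bᵀ) *ᵥ s) - s ⬝ᵥ b)
      - (bQ ⬝ᵥ x + x ⬝ᵥ Q *ᵥ x + v ⬝ᵥ R *ᵥ v) := by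
  have hRinv : R⁻¹ᵀ = R⁻¹ := by rw [transpose_nonsing_inv, hR]
  simp only [feedback, add_mulVec, sub_mulVec, neg_mulVec, mulVec_add, mulVec_sub, mulVec_neg,
    mulVec_smul, mulVec_mulVec, add_dotProduct, dotProduct_add, sub_dotProduct, dotProduct_sub,
    neg_dotProduct, dotProduct_neg, smul_dotProduct, dotProduct_smul, smul_eq_mul,
    mulVec_dotProduct, transpose_mul, hΛ, hP, hRinv, transpose_transpose, Matrix.mul_assoc,
    mul_nonsing_inv_cancel_left _ _ hRdet, nonsing_inv_mul _ hRdet, Matrix.mul_one]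
  have hPB : x ⬝ᵥ (P * B) *ᵥ v = v ⬝ᵥ (Bᵀ * P) *ᵥ x := by
    rw [← dotProduct_transpose_mulVec, transpose_mul, hP]
  have hPG : x ⬝ᵥ (P * (B * (R⁻¹ * Bᵀ))) *ᵥ s = s ⬝ᵥ (B * (R⁻¹ * (Bᵀ * P))) *ᵥ x := by
    rw [← dotProduct_transpose_mulVec]
    simp only [transpose_mul, hP, hRinv, transpose_transpose, Matrix.mul_assoc]
  have hB : v ⬝ᵥ Bᵀ *ᵥ s = s ⬝ᵥ B *ᵥ v := dotProduct_transpose_mulVec _ _ _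
  have hPb : x ⬝ᵥ P *ᵥ b = b ⬝ᵥ P *ᵥ x := by rw [← dotProduct_transpose_mulVec, hP]
  rw [hPB, hPG, hB, hPb]
  ring

variable {Λ Q M : Matrix n n ℝ} {B : Matrix n k ℝ} {R : Matrix k k ℝ} {bM : n → ℝ}
  {b bQ s : ℝ → n → ℝ} {P : ℝ → Matrix n n ℝ} {t₀ t₁ : ℝ}

theorem hasDerivWithinAt_value {S : Set ℝ} {t : ℝ} {v : ℝ → k → ℝ} {q : ℝ → n → ℝ}
    (hΛ : Λᵀ = Λ) (hR : Rᵀ = R) (hRdet : IsUnit R.det) (hPt : (P t)ᵀ = P t)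
    (hP : HasDerivWithinAt P (-(P t * Λ) - Λ * P t - Q + P t * B * R⁻¹ * Bᵀ * P t) S t)
    (hs : HasDerivWithinAt s ((P t * B * R⁻¹ * Bᵀ - Λ) *ᵥ s t + bQ t + (2 : ℝ) • P t *ᵥ b t) S t)
    (hq : HasDerivWithinAt q (Λ *ᵥ q t + B *ᵥ v t + b t) S t) :
    HasDerivWithinAt (fun τ => q τ ⬝ᵥ P τ *ᵥ q τ - s τ ⬝ᵥ q τ)
      ((v t - feedback R B (P t) (s t) (q t)) ⬝ᵥ R *ᵥ (v t - feedback R B (P t) (s t) (q t))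
        + (-(1 / 4 : ℝ) * (s t ⬝ᵥ (B * R⁻¹ * Bᵀ) *ᵥ s t) - s t ⬝ᵥ b t)
        - (bQ t ⬝ᵥ q t + q t ⬝ᵥ Q *ᵥ q t + v t ⬝ᵥ R *ᵥ v t)) S t := by
  rw [← riccati_completion_of_squares hΛ hR hRdet hPt]
  exact (hq.dotProduct (hP.matrix_mulVec hq)).sub (hs.dotProduct hq)

theorem cost_eq (ht : t₀ ≤ t₁) (hΛ : Λᵀ = Λ) (hR : Rᵀ = R) (hRdet : IsUnit R.det)
    (hPsymm : ∀ t ∈ Set.Icc t₀ t₁, (P t)ᵀ = P t)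
    (hP : ∀ t ∈ Set.Icc t₀ t₁, HasDerivWithinAt P
      (-(P t * Λ) - Λ * P t - Q + P t * B * R⁻¹ * Bᵀ * P t) (Set.Icc t₀ t₁) t)
    (hP1 : P t₁ = M)
    (hs : ∀ t ∈ Set.Icc t₀ t₁, HasDerivWithinAt s
      ((P t * B * R⁻¹ * Bᵀ - Λ) *ᵥ s t + bQ t + (2 : ℝ) • P t *ᵥ b t) (Set.Icc t₀ t₁) t)
    (hs1 : s t₁ = -bM)
    (hb : ContinuousOn b (Set.Icc t₀ t₁)) (hbQ : ContinuousOn bQ (Set.Icc t₀ t₁))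
    {v : ℝ → k → ℝ} {q : ℝ → n → ℝ} (hv : ContinuousOn v (Set.Icc t₀ t₁))
    (hq : ∀ t ∈ Set.Icc t₀ t₁,
      HasDerivWithinAt q (Λ *ᵥ q t + B *ᵥ v t + b t) (Set.Icc t₀ t₁) t) :
    cost t₀ t₁ bQ Q R bM M v q =
      (∫ t in t₀..t₁,
        (v t - feedback R B (P t) (s t) (q t)) ⬝ᵥ R *ᵥ (v t - feedback R B (P t) (s t) (q t))) +
      ((∫ t in t₀..t₁, (-(1 / 4 : ℝ) * (s t ⬝ᵥ (B * R⁻¹ * Bᵀ) *ᵥ s t) - s t ⬝ᵥ b t)) +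
        (q t₀ ⬝ᵥ P t₀ *ᵥ q t₀ - s t₀ ⬝ᵥ q t₀)) := by
  rw [cost]
  have hPc : ContinuousOn P (Set.Icc t₀ t₁) := fun t ht => (hP t ht).continuousWithinAt
  have hsc : ContinuousOn s (Set.Icc t₀ t₁) := fun t ht => (hs t ht).continuousWithinAt
  have hqc : ContinuousOn q (Set.Icc t₀ t₁) := fun t ht => (hq t ht).continuousWithinAt
  set e : ℝ → k → ℝ := fun t => v t - feedback R B (P t) (s t) (q t)
  have he : ContinuousOn e (Set.Icc t₀ t₁) := hv.sub (continuousOn_feedback R B hPc hsc hqc)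
  have hec : ContinuousOn (fun t => e t ⬝ᵥ R *ᵥ e t) (Set.Icc t₀ t₁) :=
    he.dotProduct (continuousOn_const.matrix_mulVec he)
  have hgc : ContinuousOn (fun t => -(1 / 4 : ℝ) * (s t ⬝ᵥ (B * R⁻¹ * Bᵀ) *ᵥ s t) - s t ⬝ᵥ b t)
      (Set.Icc t₀ t₁) :=
    (continuousOn_const.mul (hsc.dotProduct (continuousOn_const.matrix_mulVec hsc))).sub
      (hsc.dotProduct hb)
  have hLc : ContinuousOn (fun t => bQ t ⬝ᵥ q t + q t ⬝ᵥ Q *ᵥ q t + v t ⬝ᵥ R *ᵥ v t)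
      (Set.Icc t₀ t₁) :=
    ((hbQ.dotProduct hqc).add (hqc.dotProduct (continuousOn_const.matrix_mulVec hqc))).add
      (hv.dotProduct (continuousOn_const.matrix_mulVec hv))
  have hftc := intervalIntegral.integral_eq_sub_of_hasDerivWithinAt_Icc ht
    (fun t ht => hasDerivWithinAt_value hΛ hR hRdet (hPsymm t ht) (hP t ht) (hs t ht) (hq t ht))
    ((hec.add hgc).sub hLc)
  rw [intervalIntegral.integral_sub ((hec.intervalIntegrable_of_Icc ht).add
      (hgc.intervalIntegrable_of_Icc ht)) (hLc.intervalIntegrable_of_Icc ht),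
    intervalIntegral.integral_add (hec.intervalIntegrable_of_Icc ht)
      (hgc.intervalIntegrable_of_Icc ht), hP1, hs1, neg_dotProduct] at hftc
  linarith

end ExtendedLQR

open ExtendedLQR

theorem extended_LQR_optimality_general
    {l m : ℕ} (t₀ t₁ : ℝ) (ht : t₀ ≤ t₁)
    (Lam : Matrix (Fin l) (Fin l) ℝ) (hLam : Lamᵀ = Lam)
    (Bh : Matrix (Fin l) (Fin m) ℝ)
    (Rh : Matrix (Fin m) (Fin m) ℝ) (hRh : Rh.PosDef)
    (Q₂ : Matrix (Fin l) (Fin l) ℝ)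
    (M₂ : Matrix (Fin l) (Fin l) ℝ)
    (bM : Fin l → ℝ) (b bQ : ℝ → Fin l → ℝ)
    (hb : ContinuousOn b (Set.Icc t₀ t₁)) (hbQ : ContinuousOn bQ (Set.Icc t₀ t₁))
    (q₀ : Fin l → ℝ)
    -- the Riccati solution P, symmetric, with terminal condition P(t₁) = M₂
    (P : ℝ → Matrix (Fin l) (Fin l) ℝ)
    (hPsymm : ∀ t ∈ Set.Icc t₀ t₁, (P t)ᵀ = P t)
    (hP : ∀ t ∈ Set.Icc t₀ t₁, HasDerivWithinAt P
      (-(P t * Lam) - Lam * P t - Q₂ + P t * Bh * Rh⁻¹ * Bhᵀ * P t) (Set.Icc t₀ t₁) t)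
    (hP1 : P t₁ = M₂)
    -- the compensation vector s with terminal condition s(t₁) = −b_M
    (s : ℝ → Fin l → ℝ)
    (hs : ∀ t ∈ Set.Icc t₀ t₁, HasDerivWithinAt s
      ((P t * Bh * Rh⁻¹ * Bhᵀ - Lam).mulVec (s t) + bQ t + (2 : ℝ) • (P t).mulVec (b t))
      (Set.Icc t₀ t₁) t)
    (hs1 : s t₁ = -bM)
    -- the closed-loop optimal trajectory q*
    (qstar : ℝ → Fin l → ℝ)
    (hqstar : ∀ t ∈ Set.Icc t₀ t₁, HasDerivWithinAt qstar
      ((Lam - Bh * Rh⁻¹ * Bhᵀ * P t).mulVec (qstar t) +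
        (1 / 2 : ℝ) • (Bh * Rh⁻¹ * Bhᵀ).mulVec (s t) + b t) (Set.Icc t₀ t₁) t)
    (hqstar0 : qstar t₀ = q₀)
    -- an arbitrary continuous competing control u with its state trajectory q_u
    (u : ℝ → Fin m → ℝ) (hu : ContinuousOn u (Set.Icc t₀ t₁))
    (qu : ℝ → Fin l → ℝ)
    (hqu : ∀ t ∈ Set.Icc t₀ t₁, HasDerivWithinAt qu
      (Lam.mulVec (qu t) + Bh.mulVec (u t) + b t) (Set.Icc t₀ t₁) t)
    (hqu0 : qu t₀ = q₀) :
    (∫ t in t₀..t₁,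
        (bQ t ⬝ᵥ qu t + qu t ⬝ᵥ Q₂.mulVec (qu t) + u t ⬝ᵥ Rh.mulVec (u t))) +
      bM ⬝ᵥ qu t₁ + qu t₁ ⬝ᵥ M₂.mulVec (qu t₁) ≥
    (∫ t in t₀..t₁,
        (bQ t ⬝ᵥ qstar t + qstar t ⬝ᵥ Q₂.mulVec (qstar t) +
          (-(Rh⁻¹ * Bhᵀ * P t).mulVec (qstar t) + (1 / 2 : ℝ) • (Rh⁻¹ * Bhᵀ).mulVec (s t)) ⬝ᵥ
            Rh.mulVec
              (-(Rh⁻¹ * Bhᵀ * P t).mulVec (qstar t) +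
                (1 / 2 : ℝ) • (Rh⁻¹ * Bhᵀ).mulVec (s t)))) +
      bM ⬝ᵥ qstar t₁ + qstar t₁ ⬝ᵥ M₂.mulVec (qstar t₁) := by
  have hR : Rhᵀ = Rh := by simpa using hRh.isHermitian.eq
  have hRdet : IsUnit Rh.det := isUnit_iff_ne_zero.2 hRh.det_pos.ne'
  have hqstar' : ∀ t ∈ Set.Icc t₀ t₁, HasDerivWithinAt qstar
      (Lam *ᵥ qstar t + Bh *ᵥ feedback Rh Bh (P t) (s t) (qstar t) + b t) (Set.Icc t₀ t₁) t := by
    intro t ht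
    convert hqstar t ht using 2
    rw [mulVec_feedback, sub_mulVec, neg_mulVec]
    abel
  have hfb := continuousOn_feedback Rh Bh (P := P) (fun t ht => (hP t ht).continuousWithinAt)
    (fun t ht => (hs t ht).continuousWithinAt) (fun t ht => (hqstar' t ht).continuousWithinAt)
  change cost t₀ t₁ bQ Q₂ Rh bM M₂ u qu ≥
    cost t₀ t₁ bQ Q₂ Rh bM M₂ (fun t => feedback Rh Bh (P t) (s t) (qstar t)) qstar
  rw [cost_eq ht hLam hR hRdet hPsymm hP hP1 hs hs1 hb hbQ hu hqu,
    cost_eq ht hLam hR hRdet hPsymm hP hP1 hs hs1 hb hbQ hfb hqstar', hqu0, hqstar0, ge_iff_le,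
    add_le_add_iff_right]
  simp only [sub_self, zero_dotProduct, intervalIntegral.integral_zero]
  exact intervalIntegral.integral_nonneg ht fun t _ => by
    simpa using hRh.posSemidef.dotProduct_mulVec_nonneg (u t - feedback Rh Bh (P t) (s t) (qu t))

/-- Optimality of the extended linear–quadratic regulator: the feedback law
`u* = −R̂⁻¹B̂ᵀP(t)q* + (1/2)R̂⁻¹B̂ᵀs(t)`, built from the solution `P` of the Riccati
differential equation (with `P(t₁) = M₂`) and the compensation vector `s`
(with `s(t₁) = −b_M`), minimizes the extended quadratic cost `J̃` among all continuous
controls steering `q' = Λq + B̂u + b` from `q(t₀) = q₀`. -/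
theorem extended_LQR_optimality
    {l m : ℕ} (t₀ t₁ : ℝ) (ht : t₀ ≤ t₁)
    (Lam : Matrix (Fin l) (Fin l) ℝ) (hLam : Lamᵀ = Lam)
    (Bh : Matrix (Fin l) (Fin m) ℝ)
    (Rh : Matrix (Fin m) (Fin m) ℝ) (hRh : Rh.PosDef)
    (Q₂ : Matrix (Fin l) (Fin l) ℝ) (hQ₂ : Q₂.PosSemidef)
    (M₂ : Matrix (Fin l) (Fin l) ℝ) (hM₂ : M₂.PosSemidef)
    (bM : Fin l → ℝ) (b bQ : ℝ → Fin l → ℝ)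
    (hb : ContinuousOn b (Set.Icc t₀ t₁)) (hbQ : ContinuousOn bQ (Set.Icc t₀ t₁))
    (q₀ : Fin l → ℝ)
    -- the Riccati solution P, symmetric, with terminal condition P(t₁) = M₂
    (P : ℝ → Matrix (Fin l) (Fin l) ℝ)
    (hPsymm : ∀ t ∈ Set.Icc t₀ t₁, (P t)ᵀ = P t)
    (hPcont : ContinuousOn P (Set.Icc t₀ t₁))
    (hP : ∀ t ∈ Set.Icc t₀ t₁, HasDerivWithinAt P
      (-(P t * Lam) - Lam * P t - Q₂ + P t * Bh * Rh⁻¹ * Bhᵀ * P t) (Set.Icc t₀ t₁) t)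
    (hP1 : P t₁ = M₂)
    -- the compensation vector s with terminal condition s(t₁) = −b_M
    (s : ℝ → Fin l → ℝ)
    (hscont : ContinuousOn s (Set.Icc t₀ t₁))
    (hs : ∀ t ∈ Set.Icc t₀ t₁, HasDerivWithinAt s
      ((P t * Bh * Rh⁻¹ * Bhᵀ - Lam).mulVec (s t) + bQ t + (2 : ℝ) • (P t).mulVec (b t))
      (Set.Icc t₀ t₁) t)
    (hs1 : s t₁ = -bM)
    -- the closed-loop optimal trajectory q*
    (qstar : ℝ → Fin l → ℝ)
    (hqstar : ∀ t ∈ Set.Icc t₀ t₁, HasDerivWithinAt qstar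
      ((Lam - Bh * Rh⁻¹ * Bhᵀ * P t).mulVec (qstar t) +
        (1 / 2 : ℝ) • (Bh * Rh⁻¹ * Bhᵀ).mulVec (s t) + b t) (Set.Icc t₀ t₁) t)
    (hqstar0 : qstar t₀ = q₀)
    -- an arbitrary continuous competing control u with its state trajectory q_u
    (u : ℝ → Fin m → ℝ) (hu : ContinuousOn u (Set.Icc t₀ t₁))
    (qu : ℝ → Fin l → ℝ)
    (hqu : ∀ t ∈ Set.Icc t₀ t₁, HasDerivWithinAt qu
      (Lam.mulVec (qu t) + Bh.mulVec (u t) + b t) (Set.Icc t₀ t₁) t)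
    (hqu0 : qu t₀ = q₀) :
    (∫ t in t₀..t₁,
        (bQ t ⬝ᵥ qu t + qu t ⬝ᵥ Q₂.mulVec (qu t) + u t ⬝ᵥ Rh.mulVec (u t))) +
      bM ⬝ᵥ qu t₁ + qu t₁ ⬝ᵥ M₂.mulVec (qu t₁) ≥
    (∫ t in t₀..t₁,
        (bQ t ⬝ᵥ qstar t + qstar t ⬝ᵥ Q₂.mulVec (qstar t) +
          (-(Rh⁻¹ * Bhᵀ * P t).mulVec (qstar t) + (1 / 2 : ℝ) • (Rh⁻¹ * Bhᵀ).mulVec (s t)) ⬝ᵥ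
            Rh.mulVec
              (-(Rh⁻¹ * Bhᵀ * P t).mulVec (qstar t) +
                (1 / 2 : ℝ) • (Rh⁻¹ * Bhᵀ).mulVec (s t)))) +
      bM ⬝ᵥ qstar t₁ + qstar t₁ ⬝ᵥ M₂.mulVec (qstar t₁) :=
  extended_LQR_optimality_general t₀ t₁ ht Lam hLam Bh Rh hRh Q₂ M₂ bM b bQ hb hbQ q₀ P hPsymm hP
    hP1 s hs hs1 qstar hqstar hqstar0 u hu qu hqu hqu0
end
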